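/- Let Γ be a finite connected simple graph of genus g = |E(Γ)| − |V(Γ)| + 1, and let f be an automorphism of Γ acting without inversions (no edge is mapped to itself with its endpoints exchanged) and inducing the identity on H₁(Γ;ℚ). Then the fixed-point subgraph Fix(f) of f satisfies χ(Fix(f)) = 1 − g = χ(Γ). -/

import Mathlib

/-!
The automorphism acts on the chain complex `C₁ → C₀` of `Γ`. It is the identity on
`H₁ = ker ∂` by hypothesis, and on `H₀ = coker ∂` because `Γ` is connected: the image of `∂`
is then the sum-zero subspace, which contains `c ∘ σ⁻¹ - c` for every `c`. The Lefschetz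
argument (the traces of `σ - id` on `C₁` and on `C₀` both equal the trace of the endomorphism of
`im ∂` that they induce) gives `tr(σ | C₁) - |E| = tr(σ | C₀) - |V|`. The trace on `C₀` counts fixed
vertices, and, since no edge is inverted, the trace on `C₁` counts fixed edges.
-/

open Finset

variable {V : Type*} [Fintype V] [DecidableEq V]

/-- The group `C₁(Γ;R)` of simplicial 1-chains of a simple graph, modeled as
antisymmetric functions on ordered pairs of vertices, supported on adjacent pairs. -/
def chainSpace (R : Type*) [CommRing R] (G : SimpleGraph V) : Submodule R (V → V → R) where
  carrier := {f | (∀ u v, f u v = - f v u) ∧ ∀ u v, ¬ G.Adj u v → f u v = 0}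
  add_mem' := by
    rintro f g ⟨hf1, hf2⟩ ⟨hg1, hg2⟩
    refine ⟨fun u v => ?_, fun u v h => ?_⟩
    · simp only [Pi.add_apply, hf1 u v, hg1 u v]; ring
    · simp [Pi.add_apply, hf2 u v h, hg2 u v h]
  zero_mem' := ⟨fun u v => by simp, fun u v _ => rfl⟩
  smul_mem' := by
    rintro r f ⟨hf1, hf2⟩
    exact ⟨fun u v => by simp [hf1 u v], fun u v h => by simp [hf2 u v h]⟩

/-- The simplicial boundary map `∂ : C₁(Γ;R) → C₀(Γ;R)`, sending the oriented
edge `(u,v)` to `v - u`. -/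
def graphBoundary (R : Type*) [CommRing R] (G : SimpleGraph V) :
    chainSpace R G →ₗ[R] (V → R) where
  toFun c := fun v => ∑ u, c.1 u v
  map_add' c d := by funext v; simp [Finset.sum_add_distrib]
  map_smul' r c := by funext v; simp [Finset.mul_sum]

open Module LinearMap in
theorem LinearMap.trace_sub_finrank_eq_of_id_on_homology {K M N : Type*} [Field K]
    [AddCommGroup M] [Module K M] [FiniteDimensional K M]
    [AddCommGroup N] [Module K N] [FiniteDimensional K N]
    (d : M →ₗ[K] N) (f : M →ₗ[K] M) (h : N →ₗ[K] N) (hcomm : d ∘ₗ f = h ∘ₗ d)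
    (hker : ∀ x ∈ ker d, f x = x) (hcoker : ∀ y, h y - y ∈ range d) :
    trace K M f - finrank K M = trace K N h - finrank K N := by
  set A := f - id
  set B := h - id
  obtain ⟨s, hs⟩ := d.rangeRestrict.exists_rightInverse_of_surjective d.range_rangeRestrict
  have hds (w : range d) : d (s w) = w := congrArg Subtype.val (LinearMap.congr_fun hs w)
  let B' : N →ₗ[K] range d := codRestrict _ B hcoker
  have hA : (A ∘ₗ s) ∘ₗ d.rangeRestrict = A := by
    ext x
    have hx : s (d.rangeRestrict x) - x ∈ ker d := by
      rw [mem_ker, map_sub, hds, sub_eq_zero]; rfl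
    simp only [A, comp_apply, sub_apply, id_apply]
    rw [sub_eq_sub_iff_sub_eq_sub, ← map_sub]
    exact hker _ hx
  have hmid : d.rangeRestrict ∘ₗ (A ∘ₗ s) = B' ∘ₗ (range d).subtype := by
    ext w
    have hdA : d ∘ₗ A = B ∘ₗ d := by simp [A, B, comp_sub, sub_comp, hcomm]
    simpa [B', hds] using LinearMap.congr_fun hdA (s w)
  have htr : trace K M A = trace K N B := calc
    trace K M A = trace K _ (d.rangeRestrict ∘ₗ (A ∘ₗ s)) := by rw [← trace_comp_comm', hA]
    _ = trace K N ((range d).subtype ∘ₗ B') := by rw [hmid, trace_comp_comm']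
    _ = trace K N B := by rw [subtype_comp_codRestrict]
  simpa [A, B, trace_id] using htr

lemma Sym2.mk_out {α : Type*} (e : Sym2 α) : s(e.out.1, e.out.2) = e :=
  e.out_eq

section Chains

variable {V W R : Type*} [CommRing R] {G : SimpleGraph V} {G' : SimpleGraph W}

variable (R) in
def chainMap (φ : G ≃g G') : chainSpace R G →ₗ[R] chainSpace R G' where
  toFun c := ⟨fun u v => c.1 (φ.symm u) (φ.symm v), fun u v => c.2.1 _ _,
    fun u v huv => c.2.2 _ _ (by rwa [φ.symm.map_adj_iff])⟩
  map_add' _ _ := rfl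
  map_smul' _ _ := rfl

@[simp]
lemma chainMap_apply (φ : G ≃g G') (c : chainSpace R G) (u v : W) :
    (chainMap R φ c).1 u v = c.1 (φ.symm u) (φ.symm v) :=
  rfl

lemma SimpleGraph.adj_out_of_mem_edgeSet {e : Sym2 V} (he : e ∈ G.edgeSet) :
    G.Adj e.out.1 e.out.2 := by
  rwa [← e.mk_out] at he

variable [DecidableEq V]

variable (R) in
def edgeChain {a b : V} (h : G.Adj a b) : chainSpace R G :=
  ⟨fun u v => (if u = a ∧ v = b then 1 else 0) - (if u = b ∧ v = a then 1 else 0),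
    fun u v => by simp only [and_comm (a := u = _)]; ring,
    fun u v huv => by
      dsimp only
      rw [if_neg, if_neg, sub_zero] <;> rintro ⟨rfl, rfl⟩
      exacts [huv h.symm, huv h]⟩

@[simp]
lemma edgeChain_apply {a b : V} (h : G.Adj a b) (u v : V) :
    (edgeChain R h).1 u v = (if u = a ∧ v = b then 1 else 0) - (if u = b ∧ v = a then 1 else 0) :=
  rfl

lemma chainMap_edgeChain_apply_self (φ : G ≃g G) {a b : V} (h : G.Adj a b)
    (hab : ¬(φ a = b ∧ φ b = a)) :
    (chainMap R φ (edgeChain R h)).1 a b = if Sym2.map φ s(a, b) = s(a, b) then 1 else 0 := by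
  simp only [chainMap_apply, edgeChain_apply, Sym2.map_mk, Sym2.eq_iff, φ.symm_apply_eq]
  grind

end Chains

section Boundary

variable {V W R : Type*} [Fintype V] [Fintype W] [CommRing R] {G : SimpleGraph V}
  {G' : SimpleGraph W}

lemma graphBoundary_comp_chainMap (φ : G ≃g G') :
    graphBoundary R G' ∘ₗ chainMap R φ = LinearMap.funLeft R R φ.symm ∘ₗ graphBoundary R G := by
  ext c v
  exact φ.symm.toEquiv.sum_comp fun u => c.1 u (φ.symm v)

variable [DecidableEq V]

lemma graphBoundary_edgeChain {a b : V} (h : G.Adj a b) :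
    graphBoundary R G (edgeChain R h) = Pi.single b 1 - Pi.single a 1 := by
  ext v
  simp [graphBoundary, Finset.sum_sub_distrib, ite_and, Pi.single_apply]

lemma single_sub_single_mem_range_graphBoundary {u v : V} (huv : G.Reachable u v) :
    Pi.single v 1 - Pi.single u 1 ∈ LinearMap.range (graphBoundary R G) := by
  obtain ⟨p⟩ := huv
  induction p with
  | nil => simp
  | @cons a b c hab _ ih =>
    simpa using add_mem ih ⟨edgeChain R hab, graphBoundary_edgeChain hab⟩

lemma mem_range_graphBoundary_of_sum_eq_zero (hconn : G.Connected) {x : V → R}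
    (hx : ∑ v, x v = 0) : x ∈ LinearMap.range (graphBoundary R G) := by
  obtain ⟨v₀⟩ := hconn.nonempty
  have hx' : x = ∑ v, x v • (Pi.single v 1 - Pi.single v₀ 1) := by
    simp only [smul_sub, Finset.sum_sub_distrib, ← Finset.sum_smul, hx, zero_smul, sub_zero]
    exact pi_eq_sum_univ' x
  rw [hx']
  exact Submodule.sum_mem _ fun v _ =>
    Submodule.smul_mem _ _ (single_sub_single_mem_range_graphBoundary (hconn v₀ v))

lemma LinearMap.trace_funLeft (σ : Equiv.Perm V) :
    LinearMap.trace R (V → R) (LinearMap.funLeft R R σ) = #{v | σ v = v} := by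
  rw [LinearMap.trace_eq_matrix_trace R (Pi.basisFun R V), LinearMap.toMatrix_eq_toMatrix',
    Matrix.trace]
  simp [LinearMap.toMatrix'_apply, LinearMap.funLeft_apply, Pi.single_apply]

end Boundary

section EdgeBasis

variable {V R : Type*} [Fintype V] [CommRing R] {G : SimpleGraph V} [DecidableRel G.Adj]

lemma SimpleGraph.adj_out_of_mem_edgeFinset (e : G.edgeFinset) : G.Adj e.1.out.1 e.1.out.2 :=
  G.adj_out_of_mem_edgeSet (G.mem_edgeFinset.1 e.2)

variable (R G) in
noncomputable def edgeCoord : chainSpace R G →ₗ[R] (G.edgeFinset → R) where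
  toFun c e := c.1 e.1.out.1 e.1.out.2
  map_add' _ _ := rfl
  map_smul' _ _ := rfl

lemma edgeCoord_injective : Function.Injective (edgeCoord R G) := by
  rw [← LinearMap.ker_eq_bot, LinearMap.ker_eq_bot']
  intro c hc
  ext u v
  by_cases huv : G.Adj u v
  · have hc' := congrFun hc ⟨s(u, v), G.mem_edgeFinset.2 huv⟩
    have hout := s(u, v).mk_out
    rw [Sym2.eq_iff] at hout
    simp only [edgeCoord, LinearMap.coe_mk, AddHom.coe_mk, Pi.zero_apply] at hc'
    rcases hout with ⟨h₁, h₂⟩ | ⟨h₁, h₂⟩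
    · simpa [h₁, h₂] using hc'
    · simpa [h₁, h₂, c.2.1 u v] using hc'
  · exact c.2.2 u v huv

variable [DecidableEq V]

lemma edgeCoord_edgeChain (e : G.edgeFinset) :
    edgeCoord R G (edgeChain R (G.adj_out_of_mem_edgeFinset e)) = Pi.single e 1 := by
  ext e'
  by_cases he : e' = e
  · subst he
    simp [edgeCoord, (G.adj_out_of_mem_edgeFinset e').ne]
  · have h₁ : ¬(e'.1.out.1 = e.1.out.1 ∧ e'.1.out.2 = e.1.out.2) := by
      rintro ⟨h₁, h₂⟩
      exact he (Subtype.ext (by rw [← e'.1.mk_out, ← e.1.mk_out, h₁, h₂]))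
    have h₂ : ¬(e'.1.out.1 = e.1.out.2 ∧ e'.1.out.2 = e.1.out.1) := by
      rintro ⟨h₁, h₂⟩
      exact he (Subtype.ext (by rw [← e'.1.mk_out, ← e.1.mk_out, h₁, h₂, Sym2.eq_swap]))
    simp [edgeCoord, h₁, h₂, he]

lemma edgeCoord_surjective : Function.Surjective (edgeCoord R G) := by
  intro x
  refine ⟨∑ e, x e • edgeChain R (G.adj_out_of_mem_edgeFinset e), ?_⟩
  simp only [map_sum, map_smul, edgeCoord_edgeChain]
  exact (pi_eq_sum_univ' x).symm

variable (R G) in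
noncomputable def edgeBasis : Module.Basis G.edgeFinset R (chainSpace R G) :=
  .ofEquivFun (.ofBijective (edgeCoord R G) ⟨edgeCoord_injective, edgeCoord_surjective⟩)

lemma edgeBasis_apply (e : G.edgeFinset) :
    edgeBasis R G e = edgeChain R (G.adj_out_of_mem_edgeFinset e) := by
  rw [edgeBasis, Module.Basis.coe_ofEquivFun, LinearEquiv.symm_apply_eq]
  exact (edgeCoord_edgeChain e).symm

lemma edgeBasis_repr (c : chainSpace R G) : (edgeBasis R G).repr c = edgeCoord R G c :=
  rfl

lemma finrank_chainSpace [Nontrivial R] : Module.finrank R (chainSpace R G) = #G.edgeFinset := by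
  rw [Module.finrank_eq_card_basis (edgeBasis R G), Fintype.card_coe]

lemma trace_chainMap (φ : G ≃g G) (hφ : ∀ u v, G.Adj u v → ¬(φ u = v ∧ φ v = u)) :
    LinearMap.trace R _ (chainMap R φ) = #{e ∈ G.edgeFinset | Sym2.map φ e = e} := by
  have hdiag (e : G.edgeFinset) : (edgeBasis R G).repr (chainMap R φ (edgeBasis R G e)) e =
      if Sym2.map φ e = e then 1 else 0 := by
    have hadj := G.adj_out_of_mem_edgeFinset e
    have h := chainMap_edgeChain_apply_self (R := R) φ hadj (hφ _ _ hadj)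
    rw [Sym2.mk_out] at h
    rw [edgeBasis_apply, edgeBasis_repr]
    exact h
  rw [LinearMap.trace_eq_matrix_trace R (edgeBasis R G), Matrix.trace]
  simp only [Matrix.diag, LinearMap.toMatrix_apply, hdiag]
  rw [Finset.sum_coe_sort G.edgeFinset (fun e => if Sym2.map φ e = e then (1 : R) else 0),
    Finset.sum_boole]

end EdgeBasis

/-- Let `Γ` be a finite connected simple graph of genus `g = |E| - |V| + 1`, and let
`f` be a graph automorphism of `Γ` acting without inversions (no edge is mapped to
itself with its endpoints exchanged) and inducing the identity on `H₁(Γ;ℚ) = ker ∂`.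
Then the fixed-point subgraph `Fix(f)` satisfies `χ(Fix(f)) = 1 - g = χ(Γ)`. -/
theorem eulerChar_fixed_subgraph {V : Type*} [Fintype V] [DecidableEq V]
    (G : SimpleGraph V) [DecidableRel G.Adj]
    (hconn : G.Connected)
    (g : ℕ) (hg : (g : ℤ) = (G.edgeFinset.card : ℤ) - (Fintype.card V : ℤ) + 1)
    (σ : Equiv.Perm V)
    (hadj : ∀ u v : V, G.Adj u v ↔ G.Adj (σ u) (σ v))
    (hnoinv : ∀ u v : V, G.Adj u v → ¬ (σ u = v ∧ σ v = u))
    (hH1 : ∀ c ∈ LinearMap.ker (graphBoundary ℚ G),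
      (fun u v => c.1 (σ⁻¹ u) (σ⁻¹ v)) = c.1) :
    ((Finset.univ.filter fun v : V => σ v = v).card : ℤ)
        - ((G.edgeFinset.filter fun e => Sym2.map σ e = e).card : ℤ)
      = 1 - (g : ℤ) := by
  let φ : G ≃g G := ⟨σ, (hadj _ _).symm⟩
  have key := LinearMap.trace_sub_finrank_eq_of_id_on_homology (graphBoundary ℚ G)
    (chainMap ℚ φ) (LinearMap.funLeft ℚ ℚ ⇑σ⁻¹) (graphBoundary_comp_chainMap φ)
    (fun c hc => Subtype.ext (hH1 c hc))
    (fun x => mem_range_graphBoundary_of_sum_eq_zero hconn (by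
      simp only [Pi.sub_apply, Finset.sum_sub_distrib, LinearMap.funLeft_apply, sub_eq_zero]
      exact Equiv.sum_comp σ⁻¹ x))
  rw [trace_chainMap φ hnoinv, finrank_chainSpace, LinearMap.trace_funLeft,
    Module.finrank_fintype_fun_eq_card] at key
  have hfix : #{v | σ⁻¹ v = v} = #{v | σ v = v} := by
    congr 1
    exact Finset.filter_congr fun v _ => by rw [Equiv.Perm.inv_eq_iff_eq, eq_comm]
  rw [hfix] at key
  have : ((#{e ∈ G.edgeFinset | Sym2.map σ e = e} : ℕ) : ℤ) - #G.edgeFinset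
      = #{v | σ v = v} - Fintype.card V := by
    exact_mod_cast key
  omega
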